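/- There exists a subset S of Σ₂ which is dense in Σ₂, uncountable, invariant under the shift map σ (i.e. σ(S) ⊆ S), consists entirely of transitive points of σ, and is a 1-scrambled set for σ: for all x ≠ y in S, limsup_{n→∞} d(σⁿ(x), σⁿ(y)) = 1 and liminf_{n→∞} d(σⁿ(x), σⁿ(y)) = 0, and for every x ∈ S and every periodic point p of σ, limsup_{n→∞} d(σⁿ(x), σⁿ(p)) ≥ 1/2. -/

import Mathlib

/-!
Concatenate blocks `[2^s, 2^(s+1))` whose contents run through every finite word and through
the constants `t u`, `u : ℕ`, for a parameter `t : ℕ → Bool`, each content recurring in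
arbitrarily long blocks; `S` is the union of the orbits of the resulting points `point t`.
Every word occurs in every point of `S`, so these are transitive points. Two points of `S` meet
the all-`false` blocks at the same times, so they are frequently close. They are frequently at
distance nearly `1` through the constant blocks if their parameters differ, and otherwise, for
`shift^[a] (point t)` and `shift^[b] (point t)`, through a word negated by the shift by
`|a - b|`. A periodic point disagrees with a long constant word somewhere in every window longer
than its period.
-/

open Filter

/-- The shift map on the space `Σ₂` of binary sequences. -/
def shift (β : ℕ → Bool) : ℕ → Bool := fun i => β (i + 1)

/-- The metric `d(β,γ) = ∑ᵢ |βᵢ - γᵢ| / 2^(i+1)` on `Σ₂`. -/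
noncomputable def d2 (β γ : ℕ → Bool) : ℝ :=
  ∑' i : ℕ, |(if β i then (1 : ℝ) else 0) - (if γ i then (1 : ℝ) else 0)| / 2 ^ (i + 1)

/-- A set is dense in `Σ₂` (with respect to the metric `d2`). -/
def Dense2 (Y : Set (ℕ → Bool)) : Prop :=
  ∀ β : ℕ → Bool, ∀ ε : ℝ, 0 < ε → ∃ y ∈ Y, d2 β y < ε

lemma summable_half_pow_succ : Summable fun i : ℕ => (1 / 2 : ℝ) ^ (i + 1) :=
  (summable_geometric_two.mul_left (1 / 2)).congr fun _ => (pow_succ' _ _).symm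

lemma tsum_half_pow_succ : ∑' i : ℕ, (1 / 2 : ℝ) ^ (i + 1) = 1 := by
  simp_rw [pow_succ', tsum_mul_left, tsum_geometric_two]; norm_num

lemma d2_eq_tsum (β γ : ℕ → Bool) :
    d2 β γ = ∑' i, if β i = γ i then 0 else (1 / 2 : ℝ) ^ (i + 1) := by
  unfold d2
  congr 1 with i
  cases β i <;> cases γ i <;> simp

lemma summable_d2_term (β γ : ℕ → Bool) :
    Summable fun i => if β i = γ i then 0 else (1 / 2 : ℝ) ^ (i + 1) :=
  summable_half_pow_succ.of_nonneg_of_le (fun i => by split_ifs <;> positivity)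
    (fun i => by split_ifs <;> simp)

lemma d2_nonneg (β γ : ℕ → Bool) : 0 ≤ d2 β γ := by
  rw [d2_eq_tsum]; exact tsum_nonneg fun i => by split_ifs <;> positivity

lemma d2_add_d2_not (β γ : ℕ → Bool) : d2 β γ + d2 β (fun i => !γ i) = 1 := by
  rw [d2_eq_tsum, d2_eq_tsum, ← (summable_d2_term β γ).tsum_add (summable_d2_term _ _)]
  refine Eq.trans ?_ tsum_half_pow_succ
  congr 1 with i
  cases β i <;> cases γ i <;> simp

lemma d2_le_one (β γ : ℕ → Bool) : d2 β γ ≤ 1 := by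
  linarith [d2_add_d2_not β γ, d2_nonneg β fun i => !γ i]

lemma d2_le_of_eqOn_prefix {β γ : ℕ → Bool} {L : ℕ} (h : ∀ i < L, β i = γ i) :
    d2 β γ ≤ (1 / 2) ^ L := by
  rw [d2_eq_tsum, ← (summable_d2_term β γ).sum_add_tsum_nat_add L,
    Finset.sum_eq_zero fun i hi => if_pos (h i (Finset.mem_range.1 hi)), zero_add]
  calc ∑' i, (if β (i + L) = γ (i + L) then 0 else (1 / 2 : ℝ) ^ (i + L + 1))
      ≤ ∑' i, (1 / 2 : ℝ) ^ L * (1 / 2) ^ (i + 1) := by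
        refine ((summable_d2_term β γ).comp_injective (add_left_injective L)).tsum_le_tsum
          (fun i => ?_) (summable_half_pow_succ.mul_left _)
        split_ifs
        · positivity
        · rw [← pow_add]; ring_nf; rfl
    _ = (1 / 2) ^ L := by rw [tsum_mul_left, tsum_half_pow_succ, mul_one]

lemma one_sub_le_d2_of_ne_prefix {β γ : ℕ → Bool} {L : ℕ} (h : ∀ i < L, β i ≠ γ i) :
    1 - (1 / 2) ^ L ≤ d2 β γ := by
  have : d2 β (fun i => !γ i) ≤ (1 / 2) ^ L :=
    d2_le_of_eqOn_prefix fun i hi => Bool.eq_not_iff.2 (h i hi)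
  linarith [d2_add_d2_not β γ]

lemma Dense2.mono {Y Z : Set (ℕ → Bool)} (hY : Dense2 Y) (h : Y ⊆ Z) : Dense2 Z :=
  fun β ε hε => (hY β ε hε).imp fun _ ⟨hy, hd⟩ => ⟨h hy, hd⟩

lemma dense2_of_forall_exists_eqOn_prefix {Y : Set (ℕ → Bool)}
    (h : ∀ (β : ℕ → Bool) (L : ℕ), ∃ y ∈ Y, ∀ i < L, β i = y i) : Dense2 Y := by
  intro β ε hε
  obtain ⟨L, hL⟩ := exists_pow_lt_of_lt_one hε (by norm_num : (1 / 2 : ℝ) < 1)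
  obtain ⟨y, hy, hβy⟩ := h β L
  exact ⟨y, hy, (d2_le_of_eqOn_prefix hβy).trans_lt hL⟩

lemma shift_iterate_apply (n : ℕ) (β : ℕ → Bool) (i : ℕ) : shift^[n] β i = β (i + n) := by
  induction n generalizing β with
  | zero => rfl
  | succ n ih => rw [Function.iterate_succ_apply, ih]; simp [shift, add_assoc]

lemma dense2_range_iterate {x : ℕ → Bool}
    (h : ∀ (β : ℕ → Bool) (L : ℕ), ∃ n, ∀ i < L, x (n + i) = β i) :
    Dense2 (Set.range fun n => shift^[n] x) :=
  dense2_of_forall_exists_eqOn_prefix fun β L =>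
    let ⟨n, hn⟩ := h β L
    ⟨_, ⟨n, rfl⟩, fun i hi => by beta_reduce; rw [shift_iterate_apply, add_comm, hn i hi]⟩

lemma limsup_d2_iterate_eq_one {x y : ℕ → Bool}
    (h : ∀ L, ∃ᶠ n in atTop, ∀ i < L, x (n + i) ≠ y (n + i)) :
    limsup (fun n => d2 (shift^[n] x) (shift^[n] y)) atTop = 1 := by
  refine le_antisymm (limsup_le_of_le (isCoboundedUnder_le_of_le atTop fun n => d2_nonneg _ _)
    (Eventually.of_forall fun n => d2_le_one _ _)) (le_of_forall_sub_le fun ε hε => ?_)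
  obtain ⟨L, hL⟩ := exists_pow_lt_of_lt_one hε (by norm_num : (1 / 2 : ℝ) < 1)
  have hfar : ∃ᶠ n in atTop, 1 - (1 / 2) ^ L ≤ d2 (shift^[n] x) (shift^[n] y) :=
    (h L).mono fun n hn => one_sub_le_d2_of_ne_prefix fun i hi => by
      simpa only [shift_iterate_apply, add_comm i] using hn i hi
  linarith [le_limsup_of_frequently_le hfar (isBoundedUnder_of ⟨1, fun n => d2_le_one _ _⟩)]

lemma liminf_d2_iterate_eq_zero {x y : ℕ → Bool}
    (h : ∀ L, ∃ᶠ n in atTop, ∀ i < L, x (n + i) = y (n + i)) :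
    liminf (fun n => d2 (shift^[n] x) (shift^[n] y)) atTop = 0 := by
  refine le_antisymm (le_of_forall_pos_le_add fun ε hε => ?_)
    (le_liminf_of_le (isCoboundedUnder_ge_of_le atTop fun n => d2_le_one _ _)
      (Eventually.of_forall fun n => d2_nonneg _ _))
  obtain ⟨L, hL⟩ := exists_pow_lt_of_lt_one hε (by norm_num : (1 / 2 : ℝ) < 1)
  have hnear : ∃ᶠ n in atTop, d2 (shift^[n] x) (shift^[n] y) ≤ (1 / 2) ^ L :=
    (h L).mono fun n hn => d2_le_of_eqOn_prefix fun i hi => by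
      simpa only [shift_iterate_apply, add_comm i] using hn i hi
  linarith [liminf_le_of_frequently_le hnear (isBoundedUnder_of ⟨0, fun n => d2_nonneg _ _⟩)]

lemma half_le_limsup_d2_iterate {x y : ℕ → Bool} (h : ∃ᶠ n in atTop, x n ≠ y n) :
    1 / 2 ≤ limsup (fun n => d2 (shift^[n] x) (shift^[n] y)) atTop := by
  refine le_limsup_of_frequently_le (h.mono fun n hn => ?_)
    (isBoundedUnder_of ⟨1, fun n => d2_le_one _ _⟩)
  have := one_sub_le_d2_of_ne_prefix (L := 1) (β := shift^[n] x) (γ := shift^[n] y)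
    fun i hi => by simpa [shift_iterate_apply, Nat.lt_one_iff.1 hi] using hn
  linarith

lemma Function.Periodic.of_shift_iterate {p : ℕ → Bool} {k : ℕ} (hp : shift^[k] p = p) :
    Function.Periodic p k :=
  fun n => (shift_iterate_apply k p n).symm.trans (congrFun hp n)

lemma Function.Periodic.exists_add_le_eq {α : Type*} {p : ℕ → α} {k : ℕ}
    (hp : Function.Periodic p k) (hk : 0 < k) (m : ℕ) : ∃ i ≤ k, p (m + i) = p 0 := by
  have hdiv := Nat.div_add_mod' m k
  have hmod := Nat.mod_lt m hk
  refine ⟨(m / k + 1) * k - m, by rw [add_one_mul]; omega, ?_⟩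
  rw [← hp.nat_mul_eq (m / k + 1), Nat.cast_id, add_one_mul]
  congr 1
  omega

lemma frequently_ne_of_periodic {x p : ℕ → Bool} {k : ℕ}
    (hx : ∀ (β : ℕ → Bool) (L : ℕ), ∃ᶠ n in atTop, ∀ i < L, x (n + i) = β i)
    (hp : Function.Periodic p k) (hk : 0 < k) : ∃ᶠ n in atTop, x n ≠ p n := by
  refine frequently_atTop.2 fun N => ?_
  -- a window of `x` constantly equal to `!p 0` meets a time where `p` equals `p 0`
  obtain ⟨n, hn, hconst⟩ := frequently_atTop.1 (hx (fun _ => !p 0) (k + 1)) N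
  obtain ⟨i, hi, hpi⟩ := hp.exists_add_le_eq hk n
  exact ⟨n + i, by omega, by rw [hconst i (by omega), hpi]; simp⟩

def blockSeq {α : Type*} (f : ℕ → ℕ → α) (n : ℕ) : α :=
  f (Nat.log 2 n) (n - 2 ^ Nat.log 2 n)

lemma blockSeq_two_pow_add {α : Type*} (f : ℕ → ℕ → α) {s i : ℕ} (hi : i < 2 ^ s) :
    blockSeq f (2 ^ s + i) = f s i := by
  have hlog : Nat.log 2 (2 ^ s + i) = s :=
    Nat.log_eq_of_pow_le_of_lt_pow (Nat.le_add_right _ _) (by rw [pow_succ]; omega)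
  simp [blockSeq, hlog]

lemma Nat.bodd_add_div_right (x : ℕ) {j : ℕ} (hj : 0 < j) :
    Nat.bodd ((x + j) / j) = !Nat.bodd (x / j) := by
  rw [Nat.add_div_right _ hj, Nat.bodd_succ]

namespace ScrambledSet

open Encodable

/-- Block contents: a finite word, padded with `false`, or `inr u`, read as the constant `t u`. -/
abbrev Block := List Bool ⊕ ℕ

def Block.read (t : ℕ → Bool) : Block → ℕ → Bool
  | .inl w, i => w.getD i false
  | .inr u, _ => t u

def Block.word (β : ℕ → Bool) (L : ℕ) : Block := .inl ((List.range L).map β)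

lemma Block.read_word (t β : ℕ → Bool) {L i : ℕ} (hi : i < L) : (word β L).read t i = β i := by
  simp [word, read, List.getD_eq_getElem?_getD, hi]

/-- Block `s` has content `decode (unpair s).1`; the second coordinate of `unpair s` only serves
to make every content recur in arbitrarily late, hence long, blocks. -/
def point (t : ℕ → Bool) : ℕ → Bool :=
  blockSeq fun s i => ((decode (α := Block) s.unpair.1).map (Block.read t · i)).getD false

lemma exists_block (c : Block) (N : ℕ) :
    ∃ m ≥ N, ∀ t, ∀ i < m, point t (m + i) = c.read t i := by
  set s := Nat.pair (encode c) N
  have hs : N ≤ s := Nat.right_le_pair _ _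
  refine ⟨2 ^ s, hs.trans Nat.lt_two_pow_self.le, fun t i hi => ?_⟩
  simp only [point, blockSeq_two_pow_add _ hi, s, Nat.unpair_pair, encodek, Option.map_some,
    Option.getD_some]

lemma point_injective : Function.Injective point := by
  intro t t' h
  funext u
  obtain ⟨m, hm, hblock⟩ := exists_block (.inr u) 1
  have ht := hblock t 0 hm
  rw [h, hblock t' 0 hm] at ht
  exact ht.symm

lemma frequently_window (c : Block) (L : ℕ) :
    ∃ᶠ n in atTop, ∀ t a i, a + i < L → shift^[a] (point t) (n + i) = c.read t (a + i) := by
  refine frequently_atTop.2 fun N => ?_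
  obtain ⟨m, hm, hblock⟩ := exists_block c (N + L)
  refine ⟨m, by omega, fun t a i hi => ?_⟩
  rw [shift_iterate_apply, ← hblock t (a + i) (by omega)]
  congr 1; ring

lemma frequently_eqOn_word (t : ℕ → Bool) (a : ℕ) (β : ℕ → Bool) (L : ℕ) :
    ∃ᶠ n in atTop, ∀ i < L, shift^[a] (point t) (n + i) = β i :=
  (frequently_window (.word (fun k => β (k - a)) (a + L)) (a + L)).mono fun n hn i hi => by
    rw [hn t a i (by omega), Block.read_word _ _ (by omega), Nat.add_sub_cancel_left]

lemma frequently_eqOn (t t' : ℕ → Bool) (a b L : ℕ) :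
    ∃ᶠ n in atTop, ∀ i < L, shift^[a] (point t) (n + i) = shift^[b] (point t') (n + i) :=
  (frequently_window (.inl []) (a + b + L)).mono fun n hn i hi => by
    rw [hn t a i (by omega), hn t' b i (by omega)]; simp [Block.read]

lemma frequently_ne_of_ne (t t' : ℕ → Bool) (a b L : ℕ) (h : (a, t) ≠ (b, t')) :
    ∃ᶠ n in atTop, ∀ i < L, shift^[a] (point t) (n + i) ≠ shift^[b] (point t') (n + i) := by
  by_cases ht : t = t'
  · subst ht
    have hab : a ≠ b := fun hab => h (by rw [hab])
    set j := a - b + (b - a)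
    have hj : 0 < j := by omega
    -- the word `k ↦ bodd (k / j)` is negated by a shift of `j = |a - b|`
    refine (frequently_window (.word (fun k => Nat.bodd (k / j)) (a + b + L)) (a + b + L)).mono
      fun n hn i hi => ?_
    rw [hn t a i (by omega), hn t b i (by omega), Block.read_word _ _ (by omega),
      Block.read_word _ _ (by omega)]
    rcases lt_or_gt_of_ne hab with hlt | hlt
    · rw [show b + i = a + i + j by omega, Nat.bodd_add_div_right _ hj]; simp
    · rw [show a + i = b + i + j by omega, Nat.bodd_add_div_right _ hj]; simp
  · obtain ⟨u, hu⟩ := Function.ne_iff.1 ht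
    exact (frequently_window (.inr u) (a + b + L)).mono fun n hn i hi => by
      rw [hn t a i (by omega), hn t' b i (by omega)]; exact hu

end ScrambledSet

open ScrambledSet in
/-- There exists a dense, uncountable, shift-invariant 1-scrambled set of
transitive points for the shift map on `Σ₂`. -/
theorem shift_has_dense_uncountable_invariant_one_scrambled_set :
    ∃ S : Set (ℕ → Bool),
      Dense2 S ∧
      ¬ S.Countable ∧
      shift '' S ⊆ S ∧
      (∀ x ∈ S, Dense2 (Set.range fun n => shift^[n] x)) ∧
      (∀ x ∈ S, ∀ y ∈ S, x ≠ y →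
        limsup (fun n => d2 (shift^[n] x) (shift^[n] y)) atTop = 1 ∧
        liminf (fun n => d2 (shift^[n] x) (shift^[n] y)) atTop = 0) ∧
      (∀ x ∈ S, ∀ p : ℕ → Bool, (∃ k : ℕ, 0 < k ∧ shift^[k] p = p) →
        (1 : ℝ) / 2 ≤ limsup (fun n => d2 (shift^[n] x) (shift^[n] p)) atTop) := by
  have htrans : ∀ a t, Dense2 (Set.range fun n => shift^[n] (shift^[a] (point t))) :=
    fun a t => dense2_range_iterate fun β L => (frequently_eqOn_word t a β L).exists
  have huncountable : Uncountable (ℕ → Bool) :=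
    Cardinal.aleph0_lt_mk_iff.1 (by simpa using Cardinal.aleph0_lt_continuum)
  refine ⟨{x | ∃ a t, shift^[a] (point t) = x}, ?_, fun hS => ?_, ?_, ?_, ?_, ?_⟩
  · exact (htrans 0 fun _ => false).mono fun _ ⟨n, hn⟩ => ⟨n, _, hn⟩
  · have hrange : Set.range point ⊆ {x | ∃ a t, shift^[a] (point t) = x} :=
      fun _ ⟨t, ht⟩ => ⟨0, t, ht⟩
    exact Set.not_countable_univ (by simpa using (hS.mono hrange).preimage point_injective)
  · rintro _ ⟨_, ⟨a, t, rfl⟩, rfl⟩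
    exact ⟨a + 1, t, Function.iterate_succ_apply' shift a (point t)⟩
  · rintro _ ⟨a, t, rfl⟩
    exact htrans a t
  · rintro _ ⟨a, t, rfl⟩ _ ⟨b, t', rfl⟩ hxy
    have hne : (a, t) ≠ (b, t') := fun h => hxy (by simp_all)
    exact ⟨limsup_d2_iterate_eq_one (frequently_ne_of_ne t t' a b · hne),
      liminf_d2_iterate_eq_zero (frequently_eqOn t t' a b)⟩
  · rintro _ ⟨a, t, rfl⟩ p ⟨k, hk, hp⟩
    exact half_le_limsup_d2_iterate (frequently_ne_of_periodic (frequently_eqOn_word t a)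
      (Function.Periodic.of_shift_iterate hp) hk)
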